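/- arXiv:1704.05953 — 4 statements merged into one kernel-verified Lean document; each statement's English description precedes it below -/
import Mathlib

section
/- Let x ≥ 1, q a positive integer with q ≤ √x, a coprime to q, and β real with |β| ≤ 1/(2q√x). Define F_q(a/q + β) = ∑_{u ≤ √x, q | u} ∑_{u < v ≤ x/u} e(uv(a/q + β)). Then |F_q(a/q + β)| ≪ min(x, 1/|β|) · (log(2√x/q))/q. -/
open Finset Complex

/-! Writing `u = qj`, the summand `e(uv(a/q + β))` equals `e(v · uβ)` since `jva` is an integer,
so each inner sum is a geometric progression with ratio `e(uβ)`. As `u|β| ≤ 1/(2q) ≤ 1/2`,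
Jordan's inequality gives `‖e(uβ) - 1‖ ≥ 4u|β|`, so the inner sum is `≤ min(x, 1/|β|)/u`; the sum
over `j ≤ √x/q` of `1/(qj)` then produces the factor `log(2√x/q)/q`. -/

noncomputable def e (α : ℝ) : ℂ := exp (2 * Real.pi * I * α)

lemma e_eq_exp_I_mul (α : ℝ) : e α = exp (I * ↑(2 * Real.pi * α)) := by
  rw [e]; push_cast; ring_nf

lemma norm_e (α : ℝ) : ‖e α‖ = 1 := by
  rw [e_eq_exp_I_mul, norm_exp_I_mul_ofReal]

lemma e_intCast_add (n : ℤ) (α : ℝ) : e (n + α) = e α := by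
  rw [e, e, ofReal_add, mul_add, exp_add, ofReal_intCast, mul_comm _ (n : ℂ),
    exp_int_mul_two_pi_mul_I, one_mul]

lemma e_natCast_mul (n : ℕ) (α : ℝ) : e (n * α) = e α ^ n := by
  rw [e, e, ← exp_nat_mul]; push_cast; ring_nf

lemma four_mul_abs_le_norm_e_sub_one {t : ℝ} (ht : |t| ≤ 1 / 2) : 4 * |t| ≤ ‖e t - 1‖ := by
  have hπt : |Real.pi * t| ≤ Real.pi / 2 := by
    rw [abs_mul, abs_of_pos Real.pi_pos]; nlinarith [Real.pi_pos]
  have jordan := Real.mul_le_sin (abs_nonneg _) hπt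
  rw [← Real.abs_sin_eq_sin_abs_of_abs_le_pi (hπt.trans (by linarith [Real.pi_pos])),
    abs_mul, abs_of_pos Real.pi_pos, ← mul_assoc, div_mul_cancel₀ _ Real.pi_ne_zero] at jordan
  rw [e_eq_exp_I_mul, norm_exp_I_mul_ofReal_sub_one, norm_mul, Real.norm_eq_abs,
    Real.norm_eq_abs, abs_two, show 2 * Real.pi * t / 2 = Real.pi * t by ring]
  linarith

lemma norm_sum_Ioc_pow_le_of_norm_eq_one {z : ℂ} (hz : ‖z‖ = 1) (hz1 : z ≠ 1) (m n : ℕ) :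
    ‖∑ i ∈ Ioc m n, z ^ i‖ ≤ 2 / ‖z - 1‖ := by
  rcases le_total n m with hnm | hmn
  · rw [Ioc_eq_empty_of_le hnm, sum_empty, norm_zero]; positivity
  rw [← Ico_add_one_add_one_eq_Ioc, geom_sum_Ico hz1 (by omega), norm_div]
  gcongr
  calc ‖z ^ (n + 1) - z ^ (m + 1)‖ ≤ ‖z ^ (n + 1)‖ + ‖z ^ (m + 1)‖ := norm_sub_le _ _
    _ = 2 := by rw [norm_pow, norm_pow, hz, one_pow]; norm_num

lemma norm_sum_Ioc_e_mul_le_card (t : ℝ) (m n : ℕ) : ‖∑ v ∈ Ioc m n, e (v * t)‖ ≤ n := by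
  calc ‖∑ v ∈ Ioc m n, e (v * t)‖ ≤ ∑ v ∈ Ioc m n, ‖e (v * t)‖ := norm_sum_le _ _
    _ = (n - m : ℕ) := by simp [norm_e]
    _ ≤ n := mod_cast n.sub_le m

lemma norm_sum_Ioc_e_mul_le_inv {t : ℝ} (ht0 : t ≠ 0) (ht : |t| ≤ 1 / 2) (m n : ℕ) :
    ‖∑ v ∈ Ioc m n, e (v * t)‖ ≤ 1 / (2 * |t|) := by
  have hlow := four_mul_abs_le_norm_e_sub_one ht
  have hpos : 0 < |t| := abs_pos.mpr ht0
  have hne : e t ≠ 1 := fun h => by rw [h, sub_self, norm_zero] at hlow; linarith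
  simp_rw [e_natCast_mul]
  calc ‖∑ v ∈ Ioc m n, e t ^ v‖ ≤ 2 / ‖e t - 1‖ :=
        norm_sum_Ioc_pow_le_of_norm_eq_one (norm_e t) hne m n
    _ ≤ 2 / (4 * |t|) := by gcongr
    _ = 1 / (2 * |t|) := by field_simp; norm_num

lemma norm_sum_Ioc_e_mul_le {x β : ℝ} {u : ℕ} (hx : 0 ≤ x) (hu : 0 < u) (huβ : u * |β| ≤ 1 / 2)
    (m : ℕ) :
    ‖∑ v ∈ Ioc m ⌊x / u⌋₊, e (v * (u * β))‖ ≤ (if β = 0 then x else min x (1 / |β|)) / u := by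
  have huR : (0 : ℝ) < u := by exact_mod_cast hu
  have htriv : ‖∑ v ∈ Ioc m ⌊x / u⌋₊, e (v * (u * β))‖ ≤ x / u :=
    (norm_sum_Ioc_e_mul_le_card _ _ _).trans (Nat.floor_le (by positivity))
  split_ifs with hβ
  · exact htriv
  rw [← min_div_div_right huR.le]
  refine le_min htriv ?_
  calc ‖∑ v ∈ Ioc m ⌊x / u⌋₊, e (v * (u * β))‖ ≤ 1 / (2 * |u * β|) :=
        norm_sum_Ioc_e_mul_le_inv (by positivity) (by rwa [abs_mul, Nat.abs_cast]) _ _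
    _ ≤ 1 / |β| / u := by
        have : 0 < u * |β| := by positivity
        rw [abs_mul, Nat.abs_cast, div_div, mul_comm (|β|), one_div_le_one_div (by positivity) this]
        linarith

lemma exp_mul_div_add_eq_e {q : ℕ} (hq : q ≠ 0) (a : ℤ) (β : ℝ) (j v : ℕ) :
    Complex.exp (2 * Real.pi * Complex.I * ((q * j * v : ℕ) * ((a : ℝ) / q + β))) =
      e (v * ((q * j : ℕ) * β)) := by
  have hq' : (q : ℝ) ≠ 0 := by exact_mod_cast hq
  rw [← e_intCast_add (j * v * a), e]
  congr 1
  push_cast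
  field_simp

lemma sum_filter_dvd_Icc_one {M : Type*} [AddCommMonoid M] (f : ℕ → M) {q : ℕ} (hq : 0 < q)
    (N : ℕ) : ∑ u ∈ (Icc 1 N).filter (q ∣ ·), f u = ∑ j ∈ Icc 1 (N / q), f (q * j) := by
  symm
  refine sum_nbij' (q * ·) (· / q) ?_ ?_ ?_ ?_ (fun _ _ => rfl) <;>
    simp only [mem_filter, mem_Icc, and_imp]
  · intro j hj hjN
    refine ⟨⟨Nat.one_le_iff_ne_zero.mpr (by positivity), ?_⟩, dvd_mul_right _ _⟩
    rwa [mul_comm, ← Nat.le_div_iff_mul_le hq]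
  · rintro _ hu huN ⟨k, rfl⟩
    rw [Nat.mul_div_cancel_left _ hq]
    refine ⟨Nat.pos_of_ne_zero (by rintro rfl; simp at hu), ?_⟩
    rwa [Nat.le_div_iff_mul_le hq, mul_comm]
  · intro j _ _
    exact Nat.mul_div_cancel_left _ hq
  · intro u _ _ hdvd
    exact Nat.mul_div_cancel' hdvd

lemma sum_Icc_one_inv_le_two_mul_log {J : ℕ} {y : ℝ} (hJ : (J : ℝ) ≤ y) (hy : 1 ≤ y) :
    ∑ j ∈ Icc 1 J, (j : ℝ)⁻¹ ≤ 2 * Real.log (2 * y) := by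
  have hharm : ∑ j ∈ Icc 1 J, (j : ℝ)⁻¹ ≤ 1 + Real.log J := by
    simpa [harmonic_eq_sum_Icc] using harmonic_le_one_add_log J
  have hlogJ : Real.log J ≤ Real.log y := by
    rcases J.eq_zero_or_pos with rfl | hJ0
    · simpa using Real.log_nonneg hy
    · exact Real.log_le_log (by exact_mod_cast hJ0) hJ
  rw [Real.log_mul two_ne_zero (by linarith)]
  linarith [Real.log_two_gt_d9, Real.log_nonneg hy]

lemma mul_abs_le_one_div_two_of_le_sqrt {q : ℕ} {x u β : ℝ} (hq : 1 ≤ q) (hx : 0 < x)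
    (hu : u ≤ Real.sqrt x) (hβ : |β| ≤ 1 / (2 * q * Real.sqrt x)) : u * |β| ≤ 1 / 2 := by
  have hsqrt : 0 < Real.sqrt x := Real.sqrt_pos.mpr hx
  calc u * |β| ≤ Real.sqrt x * (1 / (2 * q * Real.sqrt x)) := by gcongr
    _ = 1 / (2 * q) := by field_simp
    _ ≤ 1 / 2 := by gcongr; linarith [show (1 : ℝ) ≤ q by exact_mod_cast hq]

/-- Brüdern's estimate for the major-arc piece `F_q`: for `x ≥ 1`, `1 ≤ q ≤ √x`,
`gcd(a,q) = 1` and `|β| ≤ 1/(2q√x)`,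
`|F_q(a/q + β)| ≪ min(x, 1/|β|) · log(2√x/q) / q` with an absolute constant
(for `β = 0` the factor `min(x, 1/|β|)` is read as `x`). -/
theorem F_q_estimate :
    ∃ C > 0, ∀ (x : ℝ) (q : ℕ) (a : ℤ) (β : ℝ), 1 ≤ x → 1 ≤ q →
      (q : ℝ) ≤ Real.sqrt x → Int.gcd a q = 1 → |β| ≤ 1 / (2 * q * Real.sqrt x) →
      ‖∑ u ∈ (Finset.Icc 1 ⌊Real.sqrt x⌋₊).filter (fun u => q ∣ u),
          ∑ v ∈ Finset.Ioc u ⌊x / u⌋₊,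
            Complex.exp (2 * Real.pi * Complex.I * ((u * v : ℕ) * ((a : ℝ) / q + β)))‖ ≤
        C * (if β = 0 then x else min x (1 / |β|)) * Real.log (2 * Real.sqrt x / q) / q := by
  refine ⟨2, two_pos, fun x q a β hx hq hqx _ hβ => ?_⟩
  set B := if β = 0 then x else min x (1 / |β|)
  have hqR : (0 : ℝ) < q := by exact_mod_cast hq
  have hsqrt : 0 < Real.sqrt x := Real.sqrt_pos.mpr (by linarith)
  have hB : 0 ≤ B := by unfold B; split_ifs <;> positivity
  have hJ : ((⌊Real.sqrt x⌋₊ / q : ℕ) : ℝ) ≤ Real.sqrt x / q := by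
    rw [le_div_iff₀ hqR]
    exact_mod_cast (Nat.cast_le.mpr (Nat.div_mul_le_self _ q)).trans (Nat.floor_le hsqrt.le)
  have hinner : ∀ j ∈ Icc 1 (⌊Real.sqrt x⌋₊ / q), ‖∑ v ∈ Ioc (q * j) ⌊x / ↑(q * j)⌋₊,
      exp (2 * Real.pi * I * ((q * j * v : ℕ) * ((a : ℝ) / q + β)))‖ ≤ B / ↑(q * j) := by
    intro j hj
    simp_rw [exp_mul_div_add_eq_e (by omega : q ≠ 0)]
    refine norm_sum_Ioc_e_mul_le (by linarith) (Nat.mul_pos hq (mem_Icc.mp hj).1) ?_ _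
    refine mul_abs_le_one_div_two_of_le_sqrt hq (by linarith) ?_ hβ
    have := (Nat.cast_le.mpr (mem_Icc.mp hj).2).trans hJ
    rw [le_div_iff₀ hqR] at this
    push_cast; linarith
  calc _ = ‖∑ j ∈ Icc 1 (⌊Real.sqrt x⌋₊ / q), ∑ v ∈ Ioc (q * j) ⌊x / ↑(q * j)⌋₊,
          exp (2 * Real.pi * I * ((q * j * v : ℕ) * ((a : ℝ) / q + β)))‖ := by
        rw [sum_filter_dvd_Icc_one _ hq]
    _ ≤ ∑ j ∈ Icc 1 (⌊Real.sqrt x⌋₊ / q), B / ↑(q * j) := norm_sum_le_of_le _ hinner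
    _ = B / q * ∑ j ∈ Icc 1 (⌊Real.sqrt x⌋₊ / q), (j : ℝ)⁻¹ := by
        rw [mul_sum]; push_cast; congr! 1 with j; field_simp
    _ ≤ B / q * (2 * Real.log (2 * (Real.sqrt x / q))) := by
        gcongr
        exact sum_Icc_one_inv_le_two_mul_log hJ ((one_le_div hqR).mpr hqx)
    _ = 2 * B * Real.log (2 * Real.sqrt x / q) / q := by ring_nf
end

section
/- Let x ≥ 1, q a positive integer, a coprime to q, and β real with |β| ≤ 1/(2q√x). Define G_q(a/q + β) = ∑_{u ≤ √x, q ∤ u} ∑_{u < v ≤ x/u} e(uv(a/q + β)). Then |G_q(a/q + β)| ≪ (√x + q) log q, with an absolute implied constant. -/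
/-!
Sum over `v` first. Writing `θ = a/q + β` and `‖t‖` for the distance from `t` to the nearest
integer, the inner sum is geometric with ratio `e(uθ)`, hence at most `1 / (2‖uθ‖)`.
For `q ∤ u` we have `‖au/q‖ ≥ 1/q ≥ 2|uβ|`, so `‖uθ‖ ≥ ‖au/q‖/2` and the inner sum is at most
`‖au/q‖⁻¹`, a function of `au mod q`. Each residue class mod `q` meets `[1, √x]` at most
`√x/q + 2` times and `u ↦ au` permutes the classes, so the whole sum is at most
`(√x/q + 2) ∑_{0<s<q} ‖s/q‖⁻¹ ≤ (√x/q + 2) · 2q H_q ≪ (√x + q) log q` (for `q ≥ 2`; for `q = 1`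
the sum is empty).
-/

open Finset
open Complex Real

noncomputable def distNearestInt (t : ℝ) : ℝ := |t - round t|

lemma distNearestInt_nonneg (t : ℝ) : 0 ≤ distNearestInt t := abs_nonneg _

lemma distNearestInt_add_intCast (t : ℝ) (m : ℤ) : distNearestInt (t + m) = distNearestInt t := by
  simp only [distNearestInt, round_add_intCast, Int.cast_add, add_sub_add_right_eq_sub]

lemma distNearestInt_sub_abs_le (t ε : ℝ) : distNearestInt t - |ε| ≤ distNearestInt (t + ε) := by
  have h := round_le t (round (t + ε))
  have h' := abs_add_le (t + ε - round (t + ε)) (-ε)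
  rw [abs_neg, show t + ε - round (t + ε) + -ε = t - round (t + ε) by ring] at h'
  unfold distNearestInt
  linarith

lemma inv_natCast_le_distNearestInt {q : ℕ} {m : ℤ} (h : ¬ (q : ℤ) ∣ m) :
    (q : ℝ)⁻¹ ≤ distNearestInt (m / q) := by
  rcases Nat.eq_zero_or_pos q with rfl | hq
  · simpa using distNearestInt_nonneg _
  have hq : (0 : ℝ) < q := by exact_mod_cast hq
  have hne : m - round ((m : ℝ) / q) * q ≠ 0 :=
    fun h0 ↦ h ⟨round ((m : ℝ) / q), by linear_combination h0⟩
  have hdist : distNearestInt (m / q) = |((m - round ((m : ℝ) / q) * q : ℤ) : ℝ)| / q := by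
    rw [distNearestInt, eq_div_iff hq.ne', ← abs_of_pos hq, ← abs_mul, abs_of_pos hq]
    push_cast
    field_simp
  rw [hdist, inv_eq_one_div]
  gcongr
  exact_mod_cast Int.one_le_abs hne

lemma distNearestInt_le_two_mul_of_abs_le {q : ℕ} {m : ℤ} (h : ¬ (q : ℤ) ∣ m) {ε : ℝ}
    (hε : |ε| ≤ 1 / (2 * q)) : distNearestInt (m / q) ≤ 2 * distNearestInt (m / q + ε) := by
  have := inv_natCast_le_distNearestInt h
  have := distNearestInt_sub_abs_le (m / q) ε
  rw [one_div, mul_inv, ← one_div] at hε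
  linarith

lemma four_mul_distNearestInt_le_norm_exp_sub_one (t : ℝ) :
    4 * distNearestInt t ≤ ‖exp (2 * π * I * t) - 1‖ := by
  set d := t - round t
  have hexp : exp (2 * π * I * t) = exp (I * ↑(2 * π * d)) := by
    rw [← mul_one (exp (I * _)), ← exp_int_mul_two_pi_mul_I (round t), ← Complex.exp_add]
    push_cast [d]
    ring_nf
  have hd : |π * d| ≤ π / 2 := by
    rw [abs_mul, abs_of_pos pi_pos]
    nlinarith [abs_sub_round t, pi_pos]
  calc 4 * distNearestInt t = 2 * (2 / π * |π * d|) := by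
        rw [abs_mul, abs_of_pos pi_pos, distNearestInt]
        field_simp
        ring
    _ ≤ 2 * |Real.sin (π * d)| := by gcongr; exact mul_abs_le_abs_sin hd
    _ = ‖exp (2 * π * I * t) - 1‖ := by
        rw [hexp, norm_exp_I_mul_ofReal_sub_one, norm_mul, Real.norm_eq_abs, Real.norm_eq_abs]
        ring_nf

lemma norm_sub_one_mul_norm_sum_Ioc_pow_le {𝕜 : Type*} [NormedDivisionRing 𝕜] {z : 𝕜}
    (hz : ‖z‖ ≤ 1) (m n : ℕ) : ‖z - 1‖ * ‖∑ v ∈ Ioc m n, z ^ v‖ ≤ 2 := by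
  rcases le_or_gt n m with h | h
  · simp [Ioc_eq_empty_of_le h]
  rw [← Ico_add_one_add_one_eq_Ioc, mul_comm, ← norm_mul, geom_sum_Ico_mul z (by omega)]
  calc ‖z ^ (n + 1) - z ^ (m + 1)‖ ≤ ‖z ^ (n + 1)‖ + ‖z ^ (m + 1)‖ := norm_sub_le _ _
    _ ≤ 1 + 1 := by gcongr <;> exact norm_pow z _ ▸ pow_le_one₀ (norm_nonneg z) hz
    _ = 2 := by norm_num

lemma two_mul_distNearestInt_mul_norm_sum_Ioc_exp_le (t : ℝ) (m n : ℕ) :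
    2 * distNearestInt t * ‖∑ v ∈ Ioc m n, exp (2 * π * I * (v * t))‖ ≤ 1 := by
  have hz : ‖exp (2 * π * I * t)‖ = 1 := by
    rw [show 2 * π * I * t = ↑(2 * π * t) * I by push_cast; ring]
    exact norm_exp_ofReal_mul_I _
  set z := exp (2 * π * I * t)
  have hpow (v : ℕ) : exp (2 * π * I * (v * t)) = z ^ v := by
    rw [← Complex.exp_nat_mul]; ring_nf
  simp only [hpow]
  nlinarith [four_mul_distNearestInt_le_norm_exp_sub_one t,
    norm_sub_one_mul_norm_sum_Ioc_pow_le hz.le m n, norm_nonneg (∑ v ∈ Ioc m n, z ^ v)]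

/-- `‖s/q‖⁻¹` for a residue `s` mod `q`; it is `0` at `s = 0`, where `0⁻¹ = 0`. -/
noncomputable def invDist (q : ℕ) (s : ZMod q) : ℝ := (distNearestInt (s.val / q))⁻¹

lemma invDist_nonneg (q : ℕ) (s : ZMod q) : 0 ≤ invDist q s :=
  inv_nonneg.mpr (distNearestInt_nonneg _)

lemma invDist_intCast {q : ℕ} [NeZero q] (m : ℤ) :
    invDist q m = (distNearestInt (m / q))⁻¹ := by
  have hq : (q : ℝ) ≠ 0 := NeZero.ne _
  have hm : (m : ℝ) / q = ((m : ZMod q).val : ℤ) / q + (m / q : ℤ) := by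
    rw [ZMod.val_intCast]
    nth_rw 1 [← Int.emod_add_mul_ediv m q]
    push_cast
    field_simp
  rw [hm, distNearestInt_add_intCast, invDist]
  rfl

lemma sum_range_natCast_le {q : ℕ} [NeZero q] {G : ZMod q → ℝ} (hG : ∀ s, 0 ≤ G s) (N : ℕ) :
    ∑ u ∈ range N, G u ≤ (N / q + 1) * ∑ s, G s := by
  rw [← sum_fiberwise (range N) (fun u : ℕ ↦ (u : ZMod q)), mul_sum]
  gcongr with s
  have hfiber : #{u ∈ range N | ((u : ℕ) : ZMod q) = s} ≤ N / q + 1 := by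
    have hcount := Nat.count_modEq_card N (Nat.pos_of_neZero q) s.val
    rw [Nat.count_eq_card_filter_range] at hcount
    simp_rw [← ZMod.natCast_eq_natCast_iff, ZMod.natCast_zmod_val] at hcount
    split_ifs at hcount <;> omega
  rw [sum_congr rfl fun u hu ↦ by rw [(mem_filter.mp hu).2], sum_const, nsmul_eq_mul]
  gcongr
  · exact hG s
  · calc (#{u ∈ range N | ((u : ℕ) : ZMod q) = s} : ℝ) ≤ (N / q + 1 : ℕ) := by
          exact_mod_cast hfiber
      _ ≤ N / q + 1 := by
          push_cast
          gcongr
          exact Nat.cast_div_le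

lemma invDist_natCast_le {q i : ℕ} (hi : i < q) :
    invDist q i ≤ q * ((i : ℝ)⁻¹ + ((q - i : ℕ) : ℝ)⁻¹) := by
  rw [invDist, ZMod.val_natCast_of_lt hi, distNearestInt, abs_sub_round_div_natCast_eq,
    Nat.mod_eq_of_lt hi, inv_div, div_eq_mul_inv]
  gcongr
  rcases min_choice i (q - i) with h | h <;> rw [h] <;> simp [inv_nonneg]

lemma sum_invDist_le (q : ℕ) [NeZero q] : ∑ s, invDist q s ≤ 2 * q * (1 + Real.log q) := by
  obtain ⟨n, rfl⟩ := Nat.exists_eq_succ_of_ne_zero (NeZero.ne q)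
  have hsum : ∑ s, invDist (n + 1) s = ∑ i ∈ range (n + 1), invDist (n + 1) i := by
    rw [← Fin.sum_univ_eq_sum_range]
    exact sum_congr rfl fun i _ ↦ congrArg _ (ZMod.natCast_zmod_val i).symm
  have hharm : ∑ i ∈ range (n + 1), (i : ℝ)⁻¹ = harmonic n := by
    simp [sum_range_succ', harmonic]
  have hharm' : ∑ i ∈ range (n + 1), ((n + 1 - i : ℕ) : ℝ)⁻¹ = harmonic (n + 1) := by
    rw [← sum_range_reflect, harmonic]
    push_cast
    refine sum_congr rfl fun i hi ↦ ?_
    rw [show n + 1 - (n - i) = i + 1 by rw [mem_range] at hi; omega]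
    push_cast
    rfl
  have hmono : (harmonic n : ℝ) ≤ harmonic (n + 1) := by
    rw [harmonic_succ]
    push_cast
    linarith [inv_nonneg.mpr (n.cast_add_one_pos (α := ℝ)).le]
  calc ∑ s, invDist (n + 1) s
      ≤ ∑ i ∈ range (n + 1), ((n + 1 : ℕ) : ℝ) * ((i : ℝ)⁻¹ + ((n + 1 - i : ℕ) : ℝ)⁻¹) :=
        hsum ▸ sum_le_sum fun i hi ↦ invDist_natCast_le (mem_range.mp hi)
    _ = ((n + 1 : ℕ) : ℝ) * (harmonic n + harmonic (n + 1)) := by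
        rw [← mul_sum, sum_add_distrib, hharm, hharm']
    _ ≤ 2 * ((n + 1 : ℕ) : ℝ) * (1 + Real.log (n + 1 : ℕ)) := by
        nlinarith [harmonic_le_one_add_log (n + 1), Nat.cast_add_one_pos (α := ℝ) n]

lemma sum_range_invDist_mul_le {q : ℕ} [NeZero q] {a : ℤ} (ha : IsCoprime a q) (N : ℕ) :
    ∑ u ∈ range N, invDist q (a * u) ≤ (N / q + 1) * (2 * q * (1 + Real.log q)) := by
  have hunit : IsUnit (a : ZMod q) := isCoprime_zero_right.mp <| by
    simpa using ha.map (Int.castRingHom (ZMod q))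
  calc ∑ u ∈ range N, invDist q (a * u) ≤ (N / q + 1) * ∑ s, invDist q (a * s) :=
        sum_range_natCast_le (fun _ ↦ invDist_nonneg _ _) N
    _ = (N / q + 1) * ∑ s, invDist q s := by
        congr 1
        exact Equiv.sum_comp (Units.mulLeft hunit.unit) (invDist q)
    _ ≤ (N / q + 1) * (2 * q * (1 + Real.log q)) := by
        gcongr
        exact sum_invDist_le q

lemma abs_mul_le_one_div_of_le {u y β q : ℝ} (hu : 0 < u) (huy : u ≤ y)
    (hβ : |β| ≤ 1 / (2 * q * y)) : |u * β| ≤ 1 / (2 * q) :=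
  calc |u * β| = u * |β| := by rw [abs_mul, abs_of_pos hu]
    _ ≤ y * (1 / (2 * q * y)) := by gcongr; linarith
    _ = 1 / (2 * q) := by field_simp [(hu.trans_le huy).ne']

lemma norm_sum_Ioc_exp_le_invDist {q : ℕ} [NeZero q] {a : ℤ} (ha : IsCoprime a q) {u : ℕ}
    (hu : ¬ q ∣ u) {β : ℝ} (hβ : |u * β| ≤ 1 / (2 * q)) (n : ℕ) :
    ‖∑ v ∈ Ioc u n, exp (2 * π * I * ((u * v : ℕ) * ((a : ℝ) / q + β)))‖ ≤ invDist q (a * u) := by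
  have hau : ¬ (q : ℤ) ∣ a * u :=
    fun h ↦ hu (Int.natCast_dvd_natCast.mp (ha.symm.dvd_of_dvd_mul_left h))
  have hsplit : (u : ℝ) * ((a : ℝ) / q + β) = ((a * u : ℤ) : ℝ) / q + u * β := by
    push_cast
    field_simp [NeZero.ne (q : ℝ)]
  have hsum := two_mul_distNearestInt_mul_norm_sum_Ioc_exp_le (u * ((a : ℝ) / q + β)) u n
  have hrat := hsplit ▸ distNearestInt_le_two_mul_of_abs_le hau hβ
  have hpos := (inv_pos.mpr (Nat.cast_pos.mpr (Nat.pos_of_neZero q))).trans_le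
    (inv_natCast_le_distNearestInt hau)
  have hcast (v : ℕ) : ((u * v : ℕ) : ℂ) * ((a : ℝ) / q + β) = v * ↑(u * ((a : ℝ) / q + β)) := by
    push_cast
    ring
  rw [show (a : ZMod q) * u = ((a * u : ℤ) : ZMod q) by push_cast; rfl, invDist_intCast,
    inv_eq_one_div, le_div_iff₀' hpos]
  simp only [hcast]
  exact (mul_le_mul_of_nonneg_right hrat (norm_nonneg _)).trans hsum

/-- Estimate for the minor piece `G_q`: for `x ≥ 1`, `q ≥ 1`, `gcd(a,q) = 1` and
`|β| ≤ 1/(2q√x)`, `|G_q(a/q + β)| ≪ (√x + q) log q` with an absolute constant. -/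
theorem G_q_estimate :
    ∃ C > 0, ∀ (x : ℝ) (q : ℕ) (a : ℤ) (β : ℝ), 1 ≤ x → 1 ≤ q →
      Int.gcd a q = 1 → |β| ≤ 1 / (2 * q * Real.sqrt x) →
      ‖∑ u ∈ (Finset.Icc 1 ⌊Real.sqrt x⌋₊).filter (fun u => ¬ q ∣ u),
          ∑ v ∈ Finset.Ioc u ⌊x / u⌋₊,
            Complex.exp (2 * Real.pi * Complex.I * ((u * v : ℕ) * ((a : ℝ) / q + β)))‖ ≤
        C * (Real.sqrt x + q) * Real.log q := by
  refine ⟨12, by norm_num, fun x q a β _ hq hgcd hβ ↦ ?_⟩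
  obtain rfl | hq2 := hq.eq_or_lt
  · simp
  have : NeZero q := ⟨by omega⟩
  have ha : IsCoprime a q := Int.isCoprime_iff_gcd_eq_one.mpr hgcd
  set U := ⌊√x⌋₊
  have hU : (U : ℝ) ≤ √x := Nat.floor_le (Real.sqrt_nonneg x)
  have hlog : 1 ≤ 2 * Real.log q := by
    have : Real.log 2 ≤ Real.log q := Real.log_le_log (by norm_num) (by exact_mod_cast hq2)
    linarith [Real.log_two_gt_d9]
  have hinner (u) (hu : u ∈ (Icc 1 U).filter (fun u => ¬ q ∣ u)) :=
    have ⟨⟨hu1, huU⟩, hqu⟩ : (1 ≤ u ∧ u ≤ U) ∧ ¬ q ∣ u := by simpa using hu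
    norm_sum_Ioc_exp_le_invDist ha hqu
      (abs_mul_le_one_div_of_le (by exact_mod_cast hu1) ((Nat.cast_le.mpr huU).trans hU) hβ)
      ⌊x / u⌋₊
  calc _ ≤ ∑ u ∈ (Icc 1 U).filter (fun u => ¬ q ∣ u), invDist q (a * u) :=
        (norm_sum_le _ _).trans (sum_le_sum hinner)
    _ ≤ ∑ u ∈ range (U + 1), invDist q (a * u) :=
        sum_le_sum_of_subset_of_nonneg
          (fun u hu ↦ by simp only [mem_filter, mem_Icc, mem_range] at hu ⊢; omega)
          fun _ _ _ ↦ invDist_nonneg _ _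
    _ ≤ ((U + 1 : ℕ) / q + 1) * (2 * q * (1 + Real.log q)) := sum_range_invDist_mul_le ha _
    _ = 2 * (U + 1 + q) * (1 + Real.log q) := by push_cast; field_simp
    _ ≤ 2 * (2 * (√x + q)) * (3 * Real.log q) := by
        gcongr
        · linarith [(Nat.one_le_cast (α := ℝ)).mpr hq]
        · linarith
    _ = 12 * (√x + q) * Real.log q := by ring
end

section
/- Assume the Pongsriiam–Vaughan estimate: for every ε > 0, real x ≥ 1 and positive integer d, ∑_{n ≤ x, d | n} τ(n) = (x/d) ∑_{r | d} (φ(r)/r)(log(x/r²) + 2γ − 1) + O((x^{1/3} + d^{1/2}) x^ε). Then for every positive integer q, U_q(x) := ∑_{n ≤ x} τ(n) c_q(n) = (φ(q)/q) x (log(x/q²) + 2γ − 1) + O(q τ(q)(x^{1/3} + q^{1/2}) x^ε). -/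
/-!
Expanding `c_q(n) = ∑_{d ∣ q, d ∣ n} d μ(q/d)` and swapping the sums gives
`U_q(x) = ∑_{d ∣ q} d μ(q/d) ∑_{n ≤ x, d ∣ n} τ(n)`. Inserting the Pongsriiam–Vaughan estimate for
each inner sum, the main terms collapse by Möbius inversion: for
`f_x(d) = ∑_{r ∣ d} (φ(r)/r)(log(x/r²) + 2γ − 1)` one has
`∑_{d ∣ q} μ(q/d) f_x(d) = (φ(q)/q)(log(x/q²) + 2γ − 1)`,
while each of the `τ(q)` error terms carries a weight `|d μ(q/d)| ≤ q`.
-/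

open Finset Real

/-- The Ramanujan sum `c_q(n) = ∑_{d ∣ gcd(n,q)} d μ(q/d)`, as a real number. -/
noncomputable def ramanujanSum (q n : ℕ) : ℝ :=
  ∑ d ∈ (Nat.gcd n q).divisors, (d : ℝ) * (ArithmeticFunction.moebius (q / d) : ℝ)

open ArithmeticFunction
open scoped ArithmeticFunction.Moebius

theorem ramanujanSum_eq_sum_filter_dvd {q : ℕ} (hq : q ≠ 0) (n : ℕ) :
    ramanujanSum q n = ∑ d ∈ q.divisors with d ∣ n, (d : ℝ) * (μ (q / d) : ℝ) := by
  have hdiv : (Nat.gcd n q).divisors = {d ∈ q.divisors | d ∣ n} := by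
    ext d
    simp [Nat.dvd_gcd_iff, hq, Nat.gcd_ne_zero_right hq, and_comm]
  rw [ramanujanSum, hdiv]

theorem sum_mul_ramanujanSum {q : ℕ} (hq : q ≠ 0) (s : Finset ℕ) (f : ℕ → ℝ) :
    ∑ n ∈ s, f n * ramanujanSum q n =
      ∑ d ∈ q.divisors, (d : ℝ) * (μ (q / d) : ℝ) * ∑ n ∈ s with d ∣ n, f n := by
  simp_rw [ramanujanSum_eq_sum_filter_dvd hq, mul_sum, mul_comm (f _)]
  refine sum_comm' fun n d => ?_
  simp only [mem_filter]
  tauto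

theorem sum_divisors_moebius_mul_sum_divisors {R : Type*} [CommRing R] (g : ℕ → R) {q : ℕ}
    (hq : q ≠ 0) :
    ∑ d ∈ q.divisors, (μ (q / d) : R) * ∑ r ∈ d.divisors, g r = g q := by
  rw [← (sum_eq_iff_sum_mul_moebius_eq (g := fun n => ∑ r ∈ n.divisors, g r)).mp
    (fun _ _ => rfl) q (Nat.pos_of_ne_zero hq),
    Nat.sum_divisorsAntidiagonal' (f := fun a b => (μ a : R) * ∑ r ∈ b.divisors, g r)]

theorem abs_sum_divisors_mul_moebius_mul_le {R : Type*} [Field R] [LinearOrder R]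
    [IsStrictOrderedRing R] {q : ℕ} (E : ℕ → R) {B : R} (hE : ∀ d ∈ q.divisors, |E d| ≤ B) :
    |∑ d ∈ q.divisors, (d : R) * (μ (q / d) : R) * E d| ≤ q * q.divisors.card * B := by
  have hweight : ∀ d ∈ q.divisors, |(d : R) * (μ (q / d) : R)| ≤ q := fun d hd => by
    have hμ : |(μ (q / d) : R)| ≤ 1 := by exact_mod_cast abs_moebius_le_one
    rw [abs_mul, Nat.abs_cast]
    calc (d : R) * |(μ (q / d) : R)| ≤ d * 1 := by gcongr
      _ ≤ q := by rw [mul_one]; exact_mod_cast Nat.divisor_le hd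
  calc |∑ d ∈ q.divisors, (d : R) * (μ (q / d) : R) * E d|
      ≤ ∑ d ∈ q.divisors, |(d : R) * (μ (q / d) : R) * E d| := abs_sum_le_sum_abs _ _
    _ ≤ ∑ _d ∈ q.divisors, (q : R) * B := by
      refine sum_le_sum fun d hd => ?_
      rw [abs_mul]
      exact mul_le_mul (hweight d hd) (hE d hd) (abs_nonneg _) (Nat.cast_nonneg q)
    _ = q * q.divisors.card * B := by rw [sum_const, nsmul_eq_mul]; ring

theorem sum_divisors_mul_moebius_mul_div_mul_sum_divisors {R : Type*} [Field R] [CharZero R]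
    (g : ℕ → R) {q : ℕ} (hq : q ≠ 0) (x : R) :
    ∑ d ∈ q.divisors, (d : R) * (μ (q / d) : R) * (x / d * ∑ r ∈ d.divisors, g r) = x * g q := by
  rw [← sum_divisors_moebius_mul_sum_divisors g hq, mul_sum]
  refine sum_congr rfl fun d hd => ?_
  have hd : (d : R) ≠ 0 := by exact_mod_cast (Nat.pos_of_mem_divisors hd).ne'
  field_simp

theorem U_q_asymptotic_general (ε : ℝ)
    (hPV : ∃ C > 0, ∀ (x : ℝ) (d : ℕ), 1 ≤ x → 1 ≤ d →
      |(∑ n ∈ (Finset.Icc 1 ⌊x⌋₊).filter (fun n => d ∣ n), (n.divisors.card : ℝ)) -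
          (x / d) * ∑ r ∈ d.divisors, ((Nat.totient r : ℝ) / r) *
            (Real.log (x / r ^ 2) + 2 * Real.eulerMascheroniConstant - 1)| ≤
        C * (x ^ ((1:ℝ)/3) + (d : ℝ) ^ ((1:ℝ)/2)) * x ^ ε) :
    ∃ C > 0, ∀ (x : ℝ) (q : ℕ), 1 ≤ x → 1 ≤ q →
      |(∑ n ∈ Finset.Icc 1 ⌊x⌋₊, (n.divisors.card : ℝ) * ramanujanSum q n) -
          ((Nat.totient q : ℝ) / q) * x *
            (Real.log (x / q ^ 2) + 2 * Real.eulerMascheroniConstant - 1)| ≤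
        C * q * (q.divisors.card : ℝ) * (x ^ ((1:ℝ)/3) + (q : ℝ) ^ ((1:ℝ)/2)) * x ^ ε := by
  obtain ⟨C, hC, hPV⟩ := hPV
  refine ⟨C, hC, fun x q hx hq => ?_⟩
  have hq0 : q ≠ 0 := Nat.one_le_iff_ne_zero.mp hq
  set g : ℕ → ℝ := fun r => ((Nat.totient r : ℝ) / r) *
    (Real.log (x / r ^ 2) + 2 * Real.eulerMascheroniConstant - 1)
  have hmain : ((Nat.totient q : ℝ) / q) * x *
      (Real.log (x / q ^ 2) + 2 * Real.eulerMascheroniConstant - 1) =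
      ∑ d ∈ q.divisors, (d : ℝ) * (μ (q / d) : ℝ) * (x / d * ∑ r ∈ d.divisors, g r) := by
    rw [sum_divisors_mul_moebius_mul_div_mul_sum_divisors g hq0]
    ring
  rw [sum_mul_ramanujanSum hq0, hmain, ← sum_sub_distrib]
  simp_rw [← mul_sub]
  calc _ ≤ q * q.divisors.card * (C * (x ^ ((1:ℝ)/3) + (q : ℝ) ^ ((1:ℝ)/2)) * x ^ ε) :=
        abs_sum_divisors_mul_moebius_mul_le _ fun d hd =>
          (hPV x d hx (Nat.pos_of_mem_divisors hd)).trans (by gcongr; exact Nat.divisor_le hd)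
    _ = _ := by ring

/-- Assuming the Pongsriiam–Vaughan estimate for `∑_{n ≤ x, d ∣ n} τ(n)`, one has
`U_q(x) = ∑_{n ≤ x} τ(n) c_q(n) = (φ(q)/q) x (log(x/q²) + 2γ − 1)
+ O(q τ(q)(x^{1/3} + q^{1/2}) x^ε)`. -/
theorem U_q_asymptotic (ε : ℝ) (hε : 0 < ε)
    (hPV : ∃ C > 0, ∀ (x : ℝ) (d : ℕ), 1 ≤ x → 1 ≤ d →
      |(∑ n ∈ (Finset.Icc 1 ⌊x⌋₊).filter (fun n => d ∣ n), (n.divisors.card : ℝ)) -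
          (x / d) * ∑ r ∈ d.divisors, ((Nat.totient r : ℝ) / r) *
            (Real.log (x / r ^ 2) + 2 * Real.eulerMascheroniConstant - 1)| ≤
        C * (x ^ ((1:ℝ)/3) + (d : ℝ) ^ ((1:ℝ)/2)) * x ^ ε) :
    ∃ C > 0, ∀ (x : ℝ) (q : ℕ), 1 ≤ x → 1 ≤ q →
      |(∑ n ∈ Finset.Icc 1 ⌊x⌋₊, (n.divisors.card : ℝ) * ramanujanSum q n) -
          ((Nat.totient q : ℝ) / q) * x *
            (Real.log (x / q ^ 2) + 2 * Real.eulerMascheroniConstant - 1)| ≤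
        C * q * (q.divisors.card : ℝ) * (x ^ ((1:ℝ)/3) + (q : ℝ) ^ ((1:ℝ)/2)) * x ^ ε :=
  U_q_asymptotic_general ε hPV
end

section
/- Let S(α) = ∑_{n ≤ x} τ(n) e(nα). Then ∫₀¹ |S(α)| dα ≥ ∑_{q ≤ √x/2} ∫_{−1/(4x)}^{1/(4x)} |∑_{n ≤ x} τ(n) c_q(n) e(nβ)| dβ. -/
/-!
Write `S(α) = ∑_{n ≤ x} τ(n) e(nα)`. Expanding the Ramanujan sum, the integrand on the left at
`β` is `|∑_a S(a/q + β)|`, which the triangle inequality bounds by `∑_a |S(a/q + β)|`. The left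
side is therefore at most the sum of the integrals of `|S|` over the intervals of radius
`δ = 1/(4x)` around the Farey fractions `a/q` with `q ≤ √x/2`. Distinct such fractions are at
least `1/(q q') ≥ 1/(2x)` apart, so these intervals are disjoint, and they all lie in the single
period `(δ, 1 + δ]` of `|S|`.
-/

open Finset intervalIntegral MeasureTheory Function

section Integration

variable {X ι : Type*} [MeasurableSpace X] {μ : Measure X}

theorem sum_setIntegral_le_setIntegral_of_pairwiseDisjoint {f : X → ℝ} {S : Set X}
    {t : Finset ι} {s : ι → Set X} (hf : ∀ x, 0 ≤ f x) (hfS : IntegrableOn f S μ)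
    (hs : ∀ i ∈ t, MeasurableSet (s i)) (hdisj : Set.Pairwise (↑t) (Disjoint on s))
    (hsub : ∀ i ∈ t, s i ⊆ S) :
    ∑ i ∈ t, ∫ x in s i, f x ∂μ ≤ ∫ x in S, f x ∂μ := by
  rw [← integral_biUnion_finset t hs hdisj fun i hi => hfS.mono_set (hsub i hi)]
  exact setIntegral_mono_set hfS (Filter.Eventually.of_forall hf)
    (Set.iUnion₂_subset hsub).eventuallyLE

end Integration

theorem Set.Ioc_disjoint_Ioc_of_le_abs_sub {c c' δ : ℝ} (h : 2 * δ ≤ |c - c'|) :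
    Disjoint (Set.Ioc (c - δ) (c + δ)) (Set.Ioc (c' - δ) (c' + δ)) := by
  rw [Set.Ioc_disjoint_Ioc, min_add_add_right, max_sub_sub_right]
  linarith [max_sub_min_eq_abs' c c']

theorem one_div_mul_le_abs_div_sub_div {a a' : ℤ} {q q' : ℕ} (hq : 0 < q) (hq' : 0 < q')
    (hne : (a : ℝ) / q ≠ a' / q') :
    1 / ((q : ℝ) * q') ≤ |(a : ℝ) / q - a' / q'| := by
  have hcross : a * q' - a' * q ≠ 0 := by
    contrapose! hne
    rw [div_eq_div_iff (by positivity) (by positivity)]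
    exact_mod_cast sub_eq_zero.mp hne
  have hone : (1 : ℝ) ≤ |(a : ℝ) * q' - a' * q| := by exact_mod_cast Int.one_le_abs hcross
  rw [div_sub_div _ _ (by positivity) (by positivity), abs_div,
    abs_of_pos (a := (q : ℝ) * q') (by positivity)]
  gcongr
  rwa [mul_comm (q : ℝ)]

theorem Nat.Coprime.eq_of_div_eq_div {a q a' q' : ℕ} (hq : 0 < q) (hq' : 0 < q')
    (h : a.Coprime q) (h' : a'.Coprime q') (heq : (a : ℝ) / q = a' / q') : a = a' ∧ q = q' := by
  have := Rat.div_int_inj (a := a) (b := q) (c := a') (d := q') (by exact_mod_cast hq)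
    (by exact_mod_cast hq') (by simpa using h) (by simpa using h')
    (Rat.cast_injective (α := ℝ) (by push_cast; exact heq))
  exact_mod_cast this

/-- The reduced fractions `a/q ∈ (0, 1]` with `q ≤ Q`, as pairs `⟨q, a⟩`. -/
def fareyPairs (Q : ℕ) : Finset (Σ _ : ℕ, ℕ) :=
  (Icc 1 Q).sigma fun q => (Icc 1 q).filter fun a => a.gcd q = 1

section Farey

variable {Q : ℕ} {δ : ℝ}

def fareyArc (δ : ℝ) (p : Σ _ : ℕ, ℕ) : Set ℝ :=
  Set.Ioc ((p.2 : ℝ) / p.1 - δ) ((p.2 : ℝ) / p.1 + δ)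

theorem mem_fareyPairs {p : Σ _ : ℕ, ℕ} :
    p ∈ fareyPairs Q ↔
      (1 ≤ p.1 ∧ p.1 ≤ Q) ∧ (1 ≤ p.2 ∧ p.2 ≤ p.1) ∧ p.2.Coprime p.1 := by
  simp only [fareyPairs, mem_sigma, mem_Icc, mem_filter, Nat.Coprime]

theorem two_mul_le_one_div_mul (hQ : 2 * δ * (Q : ℝ) ^ 2 ≤ 1) {q q' : ℕ} (hq : 0 < q)
    (hq' : 0 < q') (hqQ : q ≤ Q) (hq'Q : q' ≤ Q) : 2 * δ ≤ 1 / ((q : ℝ) * q') := by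
  rw [le_div_iff₀ (by positivity)]
  have : (q : ℝ) * q' ≤ (Q : ℝ) ^ 2 := by rw [sq]; gcongr
  rcases le_or_gt δ 0 with hδ | hδ
  · nlinarith [show (0 : ℝ) < q * q' by positivity]
  · nlinarith

theorem pairwise_disjoint_fareyArc (hQ : 2 * δ * (Q : ℝ) ^ 2 ≤ 1) :
    Set.Pairwise (fareyPairs Q : Set (Σ _ : ℕ, ℕ)) (Disjoint on fareyArc δ) := by
  rintro ⟨q, a⟩ hp ⟨q', a'⟩ hp' hne
  obtain ⟨⟨hq, hqQ⟩, -, hcop⟩ := mem_fareyPairs.mp hp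
  obtain ⟨⟨hq', hq'Q⟩, -, hcop'⟩ := mem_fareyPairs.mp hp'
  have hfrac : ((a : ℤ) : ℝ) / q ≠ ((a' : ℤ) : ℝ) / q' := by
    intro heq
    obtain ⟨rfl, rfl⟩ := hcop.eq_of_div_eq_div hq hq' hcop' (by push_cast at heq; exact heq)
    exact hne rfl
  have hspace := one_div_mul_le_abs_div_sub_div hq hq' hfrac
  push_cast at hspace
  exact Set.Ioc_disjoint_Ioc_of_le_abs_sub
    ((two_mul_le_one_div_mul hQ hq hq' hqQ hq'Q).trans hspace)

theorem fareyArc_subset (hQ : 2 * δ * (Q : ℝ) ^ 2 ≤ 1) {p : Σ _ : ℕ, ℕ}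
    (hp : p ∈ fareyPairs Q) :
    fareyArc δ p ⊆ Set.Ioc δ (1 + δ) := by
  obtain ⟨⟨hq, hqQ⟩, ⟨ha, haq⟩, -⟩ := mem_fareyPairs.mp hp
  have hq0 : (0 : ℝ) < p.1 := by exact_mod_cast hq
  have hle : (p.2 : ℝ) / p.1 ≤ 1 := (div_le_one hq0).mpr (by exact_mod_cast haq)
  have hge : 2 * δ ≤ (p.2 : ℝ) / p.1 := by
    have := two_mul_le_one_div_mul hQ hq one_pos hqQ (by omega)
    rw [Nat.cast_one, mul_one] at this
    exact this.trans (by gcongr; exact_mod_cast ha)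
  exact Set.Ioc_subset_Ioc (by linarith) (by linarith)

end Farey

noncomputable def expSum (c : ℕ → ℂ) (N : ℕ) (α : ℝ) : ℂ :=
  ∑ n ∈ Icc 1 N, c n * Complex.exp (2 * Real.pi * Complex.I * (n * α))

section ExpSum

variable (c : ℕ → ℂ) (N : ℕ)

theorem continuous_expSum : Continuous (expSum c N) := by
  unfold expSum
  fun_prop

theorem expSum_periodic : Function.Periodic (expSum c N) 1 := by
  intro α
  refine sum_congr rfl fun n _ => ?_
  push_cast
  rw [mul_add, mul_one, mul_add, Complex.exp_add, mul_comm _ (n : ℂ),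
    Complex.exp_nat_mul_two_pi_mul_I, mul_one]

theorem sum_mul_sum_exp_mul_exp (A : Finset ℕ) (q : ℕ) (β : ℝ) :
    ∑ n ∈ Icc 1 N, c n *
        (∑ a ∈ A, Complex.exp (2 * Real.pi * Complex.I * ((a : ℝ) * n / q))) *
        Complex.exp (2 * Real.pi * Complex.I * (n * β)) =
      ∑ a ∈ A, expSum c N ((a : ℝ) / q + β) := by
  simp_rw [expSum, mul_sum, sum_mul]
  rw [sum_comm]
  refine sum_congr rfl fun a _ => sum_congr rfl fun n _ => ?_
  rw [mul_assoc, ← Complex.exp_add]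
  push_cast
  ring_nf

theorem integral_norm_sum_mul_sum_exp_le {δ : ℝ} (hδ : 0 ≤ δ) (A : Finset ℕ) (q : ℕ) :
    ∫ β in (-δ)..δ, ‖∑ n ∈ Icc 1 N, c n *
        (∑ a ∈ A, Complex.exp (2 * Real.pi * Complex.I * ((a : ℝ) * n / q))) *
        Complex.exp (2 * Real.pi * Complex.I * (n * β))‖ ≤
      ∑ a ∈ A, ∫ t in Set.Ioc ((a : ℝ) / q - δ) ((a : ℝ) / q + δ),
        ‖expSum c N t‖ := by
  have hcont : Continuous fun t => ‖expSum c N t‖ := (continuous_expSum c N).norm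
  have hshift (a : ℕ) : Continuous fun β : ℝ => ‖expSum c N ((a : ℝ) / q + β)‖ :=
    hcont.comp (continuous_const_add _)
  calc _ ≤ ∫ β in (-δ)..δ, ∑ a ∈ A, ‖expSum c N ((a : ℝ) / q + β)‖ := by
        refine integral_mono_on (by linarith) (Continuous.intervalIntegrable (by fun_prop) _ _)
          ((continuous_finsetSum _ fun a _ => hshift a).intervalIntegrable _ _) fun β _ => ?_
        rw [sum_mul_sum_exp_mul_exp]
        exact norm_sum_le _ _
    _ = ∑ a ∈ A, ∫ β in (-δ)..δ, ‖expSum c N ((a : ℝ) / q + β)‖ :=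
        integral_finsetSum fun a _ => (hshift a).intervalIntegrable _ _
    _ = _ := by
        refine sum_congr rfl fun a _ => ?_
        rw [integral_comp_add_left (fun t => ‖expSum c N t‖), ← sub_eq_add_neg,
          integral_of_le (by linarith)]

end ExpSum

/-- Lower bound step: `∫₀¹ |S(α)| dα ≥ ∑_{q ≤ √x/2} ∫_{−1/(4x)}^{1/(4x)}
|∑_{n ≤ x} τ(n) c_q(n) e(nβ)| dβ`, where `c_q` is the Ramanujan sum. -/
theorem L1_lower_bound_step (x : ℝ) (hx : 1 ≤ x) :
    ∑ q ∈ Finset.Icc 1 ⌊Real.sqrt x / 2⌋₊,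
        ∫ β in (-(1 / (4 * x)))..(1 / (4 * x)),
          ‖∑ n ∈ Finset.Icc 1 ⌊x⌋₊, (n.divisors.card : ℂ) *
              (∑ a ∈ (Finset.Icc 1 q).filter (fun a => Nat.gcd a q = 1),
                Complex.exp (2 * Real.pi * Complex.I * ((a : ℝ) * n / q))) *
              Complex.exp (2 * Real.pi * Complex.I * (n * β))‖ ≤
      ∫ α in (0:ℝ)..1,
        ‖∑ n ∈ Finset.Icc 1 ⌊x⌋₊, (n.divisors.card : ℂ) *
            Complex.exp (2 * Real.pi * Complex.I * (n * α))‖ := by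
  set τ : ℕ → ℂ := fun n => (n.divisors.card : ℂ)
  set Q := ⌊Real.sqrt x / 2⌋₊
  set δ : ℝ := 1 / (4 * x)
  have hδ : 0 ≤ δ := by positivity
  have hQ : 2 * δ * (Q : ℝ) ^ 2 ≤ 1 := by
    have hQx : (2 * Q : ℝ) ^ 2 ≤ x := by
      rw [← Real.le_sqrt (by positivity) (by linarith)]
      linarith [Nat.floor_le (show 0 ≤ Real.sqrt x / 2 by positivity)]
    rw [show 2 * δ * (Q : ℝ) ^ 2 = (2 * Q : ℝ) ^ 2 / (8 * x) by ring,
      div_le_one (by linarith)]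
    linarith
  have hF : Function.Periodic (fun t => ‖expSum τ ⌊x⌋₊ t‖) 1 :=
    (expSum_periodic τ ⌊x⌋₊).comp _
  calc _ ≤ ∑ q ∈ Icc 1 Q, ∑ a ∈ (Icc 1 q).filter (fun a => a.gcd q = 1),
          ∫ t in fareyArc δ ⟨q, a⟩, ‖expSum τ ⌊x⌋₊ t‖ :=
        sum_le_sum fun q _ => integral_norm_sum_mul_sum_exp_le τ ⌊x⌋₊ hδ _ q
    _ = ∑ p ∈ fareyPairs Q, ∫ t in fareyArc δ p, ‖expSum τ ⌊x⌋₊ t‖ := by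
        rw [fareyPairs, sum_sigma]
    _ ≤ ∫ t in Set.Ioc δ (1 + δ), ‖expSum τ ⌊x⌋₊ t‖ :=
        sum_setIntegral_le_setIntegral_of_pairwiseDisjoint (fun _ => norm_nonneg _)
          (continuous_expSum τ _).norm.integrableOn_Ioc (fun _ _ => measurableSet_Ioc)
          (pairwise_disjoint_fareyArc hQ) fun _ hp => fareyArc_subset hQ hp
    _ = ∫ t in δ..δ + 1, ‖expSum τ ⌊x⌋₊ t‖ := by
        rw [integral_of_le (by linarith), add_comm]
    _ = ∫ t in (0 : ℝ)..0 + 1, ‖expSum τ ⌊x⌋₊ t‖ := hF.intervalIntegral_add_eq δ 0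
    _ = _ := by rw [zero_add]; rfl
end
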